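/- For every nonnegative integer n and every positive integer p, the sum over k from 0 to n of H_{n−k}/(k+p) equals H_{n+1}·(H_{n+p} − H_{p-1}) − (1/2)·[H_{n+1}^2 − H_{n+p}^2 + H_{n+1}^{(2)} + H_{n+p}^{(2)}] − the sum over k from 0 to p−2 of H_k/(n+k+2). -/
import Mathlib


/-- The `n`-th harmonic number `H_n = ∑_{k=1}^n 1/k`, with `H_0 = 0`. -/
def H (n : ℕ) : ℚ := ∑ k ∈ Finset.range n, 1 / ((k : ℚ) + 1)

/-- The generalized harmonic number of order 2, `H_n^{(2)} = ∑_{k=1}^n 1/k^2`, with `H_0^{(2)} = 0`. -/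
def H2 (n : ℕ) : ℚ := ∑ k ∈ Finset.range n, 1 / ((k : ℚ) + 1) ^ 2


lemma Hsucc (n : ℕ) : H (n + 1) = H n + 1 / ((n : ℚ) + 1) := Finset.sum_range_succ _ _
lemma H2succ (n : ℕ) : H2 (n + 1) = H2 n + 1 / ((n : ℚ) + 1) ^ 2 := Finset.sum_range_succ _ _

lemma Hrefl (m : ℕ) : ∑ k ∈ Finset.range (m + 1), 1 / (((m - k : ℕ) : ℚ) + 1) = H (m + 1) := by
  rw [← Finset.sum_range_reflect]
  refine Finset.sum_congr rfl fun k hk => ?_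
  have hk' : k ≤ m := by simpa [Nat.lt_succ_iff] using hk
  have : m - (m + 1 - 1 - k) = k := by omega
  rw [this]

lemma base (n : ℕ) :
    ∑ k ∈ Finset.range (n + 1), H (n - k) / ((k : ℚ) + 1) = H (n + 1) ^ 2 - H2 (n + 1) := by
  induction n with
  | zero => simp [H, H2]
  | succ m ih =>
    rw [Finset.sum_range_succ]
    have h0 : H (m + 1 - (m + 1)) = 0 := by simp [H]
    rw [h0]
    have key : ∀ k ∈ Finset.range (m + 1),
        H (m + 1 - k) / ((k : ℚ) + 1)
          = H (m - k) / ((k : ℚ) + 1)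
            + (1 / ((m : ℚ) + 2)) * (1 / ((k : ℚ) + 1) + 1 / (((m - k : ℕ) : ℚ) + 1)) := by
      intro k hk
      have hk' : k ≤ m := by simpa [Nat.lt_succ_iff] using hk
      have h1 : m + 1 - k = (m - k) + 1 := by omega
      rw [h1, Hsucc, Nat.cast_sub hk']
      have d1 : (k : ℚ) + 1 ≠ 0 := by positivity
      have d3 : (m : ℚ) + 2 ≠ 0 := by positivity
      have hkm : (k : ℚ) ≤ (m : ℚ) := by exact_mod_cast hk'
      have d2 : (m : ℚ) - k + 1 ≠ 0 := by
        have : (0:ℚ) < (m : ℚ) - k + 1 := by linarith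
        linarith
      field_simp
      ring
    rw [Finset.sum_congr rfl key, Finset.sum_add_distrib, ← Finset.mul_sum,
      Finset.sum_add_distrib, Hrefl, ih]
    have : ∑ k ∈ Finset.range (m + 1), 1 / ((k : ℚ) + 1) = H (m + 1) := rfl
    rw [this, Hsucc (m+1), H2succ (m+1)]
    have d3 : (m : ℚ) + 2 ≠ 0 := by positivity
    push_cast
    field_simp
    ring

lemma L2 (n r : ℕ) :
    ∑ k ∈ Finset.range r, 1 / (((k : ℚ) + 1) * ((n : ℚ) + k + 3))
      = (1 / ((n : ℚ) + 2)) * (H r + H (n + 2) - H (n + r + 2)) := by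
  induction r with
  | zero =>
    have : n + 0 + 2 = n + 2 := by omega
    simp [H, this]
  | succ r ih =>
    rw [Finset.sum_range_succ, ih, Hsucc r]
    have h1 : n + (r + 1) + 2 = (n + r + 2) + 1 := by omega
    rw [h1, Hsucc (n + r + 2)]
    have d1 : (r : ℚ) + 1 ≠ 0 := by positivity
    have d2 : (n : ℚ) + 2 ≠ 0 := by positivity
    have d3 : (n : ℚ) + r + 3 ≠ 0 := by positivity
    have d4 : ((n + r + 2 : ℕ) : ℚ) + 1 = (n : ℚ) + r + 3 := by push_cast; ring
    rw [d4]
    field_simp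
    ring

theorem stmt_1 (n p : ℕ) (hp : 0 < p) :
    ∑ k ∈ Finset.range (n + 1), H (n - k) / ((k : ℚ) + p) =
      H (n + 1) * (H (n + p) - H (p - 1))
        - (1 / 2) * (H (n + 1) ^ 2 - H (n + p) ^ 2 + H2 (n + 1) + H2 (n + p))
        - ∑ k ∈ Finset.range (p - 1), H k / ((n : ℚ) + k + 2) := by
  induction p generalizing n with
  | zero => exact absurd hp (lt_irrefl 0)
  | succ q ihq =>
    rcases Nat.eq_zero_or_pos q with rfl | hq
    · simp only [Nat.zero_add, Nat.cast_one, Nat.add_sub_cancel]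
      rw [base n]
      simp [H]
      ring
    · obtain ⟨r, rfl⟩ : ∃ r, q = r + 1 := ⟨q - 1, by omega⟩
      have IH := ihq (n + 1) hq
      -- Reindex the LHS of IH
      rw [Finset.sum_range_succ'] at IH
      have e1 : ∀ k ∈ Finset.range (n + 1),
          H (n + 1 - (k + 1)) / (((k + 1 : ℕ) : ℚ) + ((r + 1 : ℕ) : ℚ))
            = H (n - k) / ((k : ℚ) + ((r + 1 + 1 : ℕ) : ℚ)) := by
        intro k hk
        have h1 : n + 1 - (k + 1) = n - k := by omega
        rw [h1]
        push_cast
        ring_nf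
      rw [Finset.sum_congr rfl e1] at IH
      have h2 : n + 1 - 0 = n + 1 := by omega
      rw [h2] at IH
      -- Now IH : LHS_goal + H(n+1)/((0:ℚ)+(r+1)) = RHS(n+1, r+1)
      have hsum : ∑ k ∈ Finset.range (r + 1 + 1 - 1), H k / ((n : ℚ) + k + 2)
          = ∑ k ∈ Finset.range (r + 1 - 1), H k / (((n + 1 : ℕ) : ℚ) + k + 2)
            + (1 / ((n : ℚ) + 2)) * (H r + H (n + 2) - H (n + r + 2)) := by
        have h3 : r + 1 + 1 - 1 = r + 1 := by omega
        have h4 : r + 1 - 1 = r := by omega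
        rw [h3, h4, Finset.sum_range_succ']
        have e2 : ∀ k ∈ Finset.range r,
            H (k + 1) / ((n : ℚ) + ((k + 1 : ℕ) : ℚ) + 2)
              = H k / (((n + 1 : ℕ) : ℚ) + (k : ℚ) + 2)
                + 1 / (((k : ℚ) + 1) * ((n : ℚ) + k + 3)) := by
          intro k hk
          rw [Hsucc]
          have d1 : (k : ℚ) + 1 ≠ 0 := by positivity
          have d3 : (n : ℚ) + k + 3 ≠ 0 := by positivity
          push_cast
          field_simp
          ring
        rw [Finset.sum_congr rfl e2, Finset.sum_add_distrib, L2]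
        simp [H]
      rw [hsum]
      -- Now pure algebra from IH
      have hq1 : (n : ℚ) + 1 + (r + 1) = (n : ℚ) + r + 2 := by ring
      have i1 : n + 1 + 1 = n + 2 := by omega
      have i2 : n + 1 + (r + 1) = n + r + 2 := by omega
      have i3 : r + 1 - 1 = r := by omega
      have i4 : n + (r + 1 + 1) = n + r + 2 := by omega
      have i5 : r + 1 + 1 - 1 = r + 1 := by omega
      rw [i1, i2, i3] at IH
      rw [i4, i5]
      rw [eq_sub_of_add_eq IH]
      rw [Hsucc (n+1), H2succ (n+1), Hsucc r]
      have d1 : ((n:ℚ) + 1) + 1 ≠ 0 := by positivity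
      have d2 : (r : ℚ) + 1 ≠ 0 := by positivity
      have d3 : (n : ℚ) + 2 ≠ 0 := by positivity
      push_cast
      field_simp
      ring
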